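/- Let 𝒞_V assign to each (q, p) ∈ ℝᵐ × ℝᵐ a linear subspace 𝒞_V(q, p) ⊆ ℝᵐ, and let L : ℝᵐ × ℝᵐ → ℝ be continuously differentiable. On T*𝒬 = ℝᵐ × ℝᵐ define Δ(q, p) := 𝒞_V(q, p) × ℝᵐ and the canonical symplectic form Ω((a, c), (a′, c′)) := ⟨a, c′⟩ − ⟨a′, c⟩. Then a C¹ curve (q(t), v(t), p(t)) ∈ ℝ³ᵐ satisfies the Lagrange-Dirac system [p(t) = (∂L/∂v)(q(t), v(t)) and ((q̇(t), ṗ(t)), (−(∂L/∂q)(q(t), v(t)), v(t))) ∈ D(Ω, Δ(q(t), p(t)))] for all t, if and only if for all t: q̇(t) ∈ 𝒞_V(q(t), p(t)), v(t) = q̇(t), p(t) = (∂L/∂v)(q(t), v(t)), and ⟨ṗ(t) − (∂L/∂q)(q(t), v(t)), w⟩ = 0 for all w ∈ 𝒞_V(q(t), p(t)). -/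
import Mathlib


open scoped RealInnerProductSpace

noncomputable section

/-- `ℝᵐ` with the Euclidean inner product. -/
abbrev E (m : ℕ) : Type := EuclideanSpace ℝ (Fin m)

/-- Gradient of `L` in its first argument `q`. -/
noncomputable def gQ {m : ℕ} (L : E m → E m → ℝ) (q v : E m) : E m :=
  gradient (fun x => L x v) q

/-- Gradient of `L` in its second argument `v`. -/
noncomputable def gV {m : ℕ} (L : E m → E m → ℝ) (q v : E m) : E m :=
  gradient (fun y => L q y) v

/-- The Dirac structure induced by a form `ω` and a subspace `Δ`, covectors being
identified with vectors via the pairing `pair` (the Euclidean inner product). -/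
def Dirac {F : Type*} (pair ω : F → F → ℝ) (Δ : Set F) : Set (F × F) :=
  {p | p.1 ∈ Δ ∧ ∀ w ∈ Δ, pair p.2 w = ω p.1 w}

/-- Euclidean pairing on `T*𝒬 = ℝᵐ × ℝᵐ`. -/
def pair2 {m : ℕ} (ζ w : E m × E m) : ℝ := ⟪ζ.1, w.1⟫ + ⟪ζ.2, w.2⟫

/-- Canonical symplectic form `Ω((a,c),(a',c')) = ⟨a,c'⟩ − ⟨a',c⟩` on `T*𝒬`. -/
def Omega2 {m : ℕ} (x y : E m × E m) : ℝ := ⟪x.1, y.2⟫ - ⟪y.1, x.2⟫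

/-- the Lagrange-Dirac system on the cotangent bundle, with the Dirac
differential `d_D L(q,v) = (−∂L/∂q, v)` based at `(q, ∂L/∂v)`, is equivalent to the
implicit first-order differential-algebraic equations. -/
theorem statement6 {m : ℕ} (CVs : E m → E m → Submodule ℝ (E m))
    (L : E m → E m → ℝ) (hL : ContDiff ℝ 1 (Function.uncurry L))
    (q v p : ℝ → E m)
    (hq : ContDiff ℝ 1 q) (hv : ContDiff ℝ 1 v) (hp : ContDiff ℝ 1 p) :
    (∀ t : ℝ, p t = gV L (q t) (v t) ∧
      ((deriv q t, deriv p t), (-(gQ L (q t) (v t)), v t)) ∈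
        Dirac pair2 Omega2 {w : E m × E m | w.1 ∈ CVs (q t) (p t)}) ↔
    (∀ t : ℝ, deriv q t ∈ CVs (q t) (p t) ∧ v t = deriv q t ∧
      p t = gV L (q t) (v t) ∧
      ∀ w ∈ CVs (q t) (p t), ⟪deriv p t - gQ L (q t) (v t), w⟫ = 0) := by
  constructor
  · intro h t
    obtain ⟨hpt, h1, h2⟩ := h t
    refine ⟨h1, ?_, hpt, ?_⟩
    · apply ext_inner_right ℝ
      intro w2
      have := h2 (0, w2) (Submodule.zero_mem _)
      simp only [pair2, Omega2, inner_zero_left, inner_zero_right, zero_add,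
        add_zero, sub_zero, zero_sub, neg_neg] at this
      linarith
    · intro w hw
      have := h2 (w, 0) hw
      simp only [pair2, Omega2, inner_zero_left, inner_zero_right, zero_add,
        add_zero, sub_zero, zero_sub, inner_neg_left, inner_sub_left] at this ⊢
      have hc := real_inner_comm w (deriv p t)
      linarith
  · intro h t
    obtain ⟨h1, h2, h3, h4⟩ := h t
    refine ⟨h3, h1, ?_⟩
    rintro ⟨w1, w2⟩ hw
    have := h4 w1 hw
    simp only [pair2, Omega2, inner_neg_left, inner_sub_left, h2] at this ⊢
    have hc := real_inner_comm w1 (deriv p t)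
    linarith
end
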